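/- arXiv:1312.6503 — 2 statements merged into one kernel-verified Lean document; each statement's English description precedes it below -/
import Mathlib

section
/- Every cubic (3-regular) graph without an induced 4-cycle has Grundy number 4. -/
variable {V : Type*}

/-- `c` is a Grundy coloring of `G`: a proper coloring with positive integer
colors in which every vertex of color `i` has, for each `1 ≤ j < i`, a neighbor
of color `j`. -/
def IsGrundyColoring (G : SimpleGraph V) (c : V → ℕ) : Prop :=
  (∀ v, 1 ≤ c v) ∧
  (∀ v w, G.Adj v w → c v ≠ c w) ∧
  (∀ v j, 1 ≤ j → j < c v → ∃ u, G.Adj v u ∧ c u = j)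

/-- `c` is a Grundy `k`-coloring of `G`: a Grundy coloring using exactly the
colors `1, …, k` (surjectively). -/
def IsGrundyKColoring (G : SimpleGraph V) (c : V → ℕ) (k : ℕ) : Prop :=
  IsGrundyColoring G c ∧ (∀ v, c v ≤ k) ∧ (∀ j, 1 ≤ j → j ≤ k → ∃ v, c v = j)

/-- `G` admits a Grundy `k`-coloring. -/
def GrundyColorable (G : SimpleGraph V) (k : ℕ) : Prop :=
  ∃ c : V → ℕ, IsGrundyKColoring G c k

/-- The Grundy number of `G`: the largest `k` such that `G` admits a Grundy
`k`-coloring. -/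
noncomputable def grundy (G : SimpleGraph V) : ℕ :=
  sSup {k | GrundyColorable G k}

/-- `X` is an independent module of `G`: an independent set of vertices all
having the same neighborhood. -/
def IndepModule (G : SimpleGraph V) (X : Set V) : Prop :=
  (∀ x ∈ X, ∀ y ∈ X, ¬ G.Adj x y) ∧
  (∀ x ∈ X, ∀ y ∈ X, ∀ z, G.Adj x z ↔ G.Adj y z)

/-- The neighborhood of `v` in `G` can be partitioned into `n` independent
modules of `G`. -/
def NbhdPartition (G : SimpleGraph V) (v : V) (n : ℕ) : Prop :=
  ∃ M : Fin n → Set V, (∀ i, IndepModule G (M i)) ∧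
    (∀ i j, i ≠ j → Disjoint (M i) (M j)) ∧
    (⋃ i, M i) = G.neighborSet v

/-- `G` contains an induced 4-cycle. -/
def HasInducedC4 (G : SimpleGraph V) : Prop :=
  ∃ a b c d : V, a ≠ b ∧ a ≠ c ∧ a ≠ d ∧ b ≠ c ∧ b ≠ d ∧ c ≠ d ∧
    G.Adj a b ∧ G.Adj b c ∧ G.Adj c d ∧ G.Adj d a ∧ ¬ G.Adj a c ∧ ¬ G.Adj b d

/-- `G` admits a partial Grundy `k`-coloring: a surjective proper coloring with
colors `1, …, k` such that every color class `j` contains a vertex having, for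
each `1 ≤ i < j`, a neighbor of color `i`. -/
def PartialGrundyColorable (G : SimpleGraph V) (k : ℕ) : Prop :=
  ∃ c : V → ℕ, (∀ v, 1 ≤ c v ∧ c v ≤ k) ∧
    (∀ v w, G.Adj v w → c v ≠ c w) ∧
    (∀ j, 1 ≤ j → j ≤ k →
      ∃ v, c v = j ∧ ∀ i, 1 ≤ i → i < j → ∃ u, G.Adj v u ∧ c u = i)

/-- The partial Grundy number of `G`. -/
noncomputable def partialGrundy (G : SimpleGraph V) : ℕ :=
  sSup {k | PartialGrundyColorable G k}

/-!
A Grundy coloring uses at most `Δ + 1 = 4` colors, and first fit extends any partial Grundy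
coloring to a total one, so it suffices to find a partial Grundy coloring with a vertex of
color `4`. The binomial tree of order `3` provides one: a root `v` with children `a, b, c`
colored `1, 2, 3`, a child `b'` of `b` and children `c₁, c₂` of `c` colored `1, 1, 2`, and a
child `c₂'` of `c₂` colored `1`; all that is needed is that `{a, b', c₁, c₂'}` and `{b, c₂}` be
independent. If `G` has a triangle `v a b`, take `b' = a`; the absence of an induced `C₄`
together with cubicity then takes care of the remaining adjacencies. If `G` has no triangle, it
has girth at least `5`, and the only adjacencies left to avoid are those of `b'` with `c₁` and
`c₂'`, and of `a` with `c₂'`: the first two by choosing `b'` and `c₂'` among two candidates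
each, the last by exchanging `a` and `b`.
-/

section Precoloring

variable {G : SimpleGraph V}
open SimpleGraph

/-- A partial Grundy coloring; `p x = 0` means that `x` is uncolored. -/
def IsGrundyPrecoloring (G : SimpleGraph V) (p : V → ℕ) : Prop :=
  (∀ x y, G.Adj x y → p x ≠ 0 → p x ≠ p y) ∧
  (∀ x j, 1 ≤ j → j < p x → ∃ u, G.Adj x u ∧ p u = j)

lemma IsGrundyColoring.isGrundyPrecoloring {c : V → ℕ} (hc : IsGrundyColoring G c) :
    IsGrundyPrecoloring G c :=
  ⟨fun x y h _ => hc.2.1 x y h, hc.2.2⟩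

lemma IsGrundyPrecoloring.le_degree_add_one [G.LocallyFinite] {p : V → ℕ}
    (hp : IsGrundyPrecoloring G p) (x : V) : p x ≤ G.degree x + 1 := by
  classical
  have hsub : Finset.Icc 1 (p x - 1) ⊆ (G.neighborFinset x).image p := by
    intro j hj
    rw [Finset.mem_Icc] at hj
    obtain ⟨u, hxu, rfl⟩ := hp.2 x j hj.1 (by omega)
    exact Finset.mem_image_of_mem p ((G.mem_neighborFinset x u).2 hxu)
  have := (Finset.card_le_card hsub).trans Finset.card_image_le
  rw [Nat.card_Icc, card_neighborFinset_eq_degree] at this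
  omega

lemma exists_firstFit_color (G : SimpleGraph V) [G.LocallyFinite] (p : V → ℕ) (x : V) :
    ∃ m, 1 ≤ m ∧ (∀ u, G.Adj x u → p u ≠ m) ∧
      ∀ j, 1 ≤ j → j < m → ∃ u, G.Adj x u ∧ p u = j := by
  classical
  have hex : ∃ m, 1 ≤ m ∧ ∀ u, G.Adj x u → p u ≠ m := by
    refine ⟨(G.neighborFinset x).sup p + 1, by omega, fun u hxu h => ?_⟩
    have := Finset.le_sup (f := p) ((G.mem_neighborFinset x u).2 hxu)
    omega
  refine ⟨Nat.find hex, (Nat.find_spec hex).1, (Nat.find_spec hex).2, fun j hj hjm => ?_⟩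
  by_contra! hmiss
  exact Nat.find_min hex hjm ⟨hj, hmiss⟩

lemma IsGrundyPrecoloring.exists_update [G.LocallyFinite] [DecidableEq V] {p : V → ℕ}
    (hp : IsGrundyPrecoloring G p) {x : V} (hx : p x = 0) :
    ∃ m, 1 ≤ m ∧ IsGrundyPrecoloring G (Function.update p x m) := by
  obtain ⟨m, hm, hmiss, hsees⟩ := exists_firstFit_color G p x
  have hne {u : V} {j : ℕ} (hj : 1 ≤ j) (hu : p u = j) : u ≠ x := by rintro rfl; omega
  refine ⟨m, hm, fun y z hyz hy => ?_, fun y j hj hjy => ?_⟩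
  · rcases eq_or_ne y x with rfl | hyx
    · simpa [hyz.ne'] using (hmiss z hyz).symm
    rcases eq_or_ne z x with rfl | hzx
    · simpa [hyx] using hmiss y hyz.symm
    simp only [Function.update_of_ne hyx, Function.update_of_ne hzx] at hy ⊢
    exact hp.1 y z hyz hy
  · rcases eq_or_ne y x with rfl | hyx
    · obtain ⟨u, hyu, hu⟩ := hsees j hj (by simpa using hjy)
      exact ⟨u, hyu, by rwa [Function.update_of_ne (hne hj hu)]⟩
    · rw [Function.update_of_ne hyx] at hjy
      obtain ⟨u, hyu, hu⟩ := hp.2 y j hj hjy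
      exact ⟨u, hyu, by rwa [Function.update_of_ne (hne hj hu)]⟩

lemma IsGrundyPrecoloring.exists_grundyColoring [Finite V] {p : V → ℕ}
    (hp : IsGrundyPrecoloring G p) :
    ∃ c, IsGrundyColoring G c ∧ ∀ x, p x ≠ 0 → c x = p x := by
  classical
  have := Fintype.ofFinite V
  induction h : {x | p x = 0}.ncard generalizing p with
  | zero =>
    have hpos : ∀ x, p x ≠ 0 := fun x hx =>
      (Set.ncard_eq_zero (s := {x | p x = 0})).1 h |>.subset hx
    exact ⟨p, ⟨fun x => Nat.one_le_iff_ne_zero.2 (hpos x), fun x y hxy => hp.1 x y hxy (hpos x),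
      hp.2⟩, fun _ _ => rfl⟩
  | succ n ih =>
    obtain ⟨x, hx⟩ := Set.nonempty_of_ncard_ne_zero (s := {x | p x = 0}) (by omega)
    obtain ⟨m, hm, hp'⟩ := hp.exists_update hx
    have hcard : {y | Function.update p x m y = 0}.ncard = n := by
      have : {y | Function.update p x m y = 0} = {y | p y = 0} \ {x} := by
        ext y
        rcases eq_or_ne y x with rfl | hyx
        · simpa using Nat.one_le_iff_ne_zero.1 hm
        · simp [hyx]
      rw [this, Set.ncard_sdiff_singleton_of_mem hx, h, Nat.add_sub_cancel]
    obtain ⟨c, hc, hcp⟩ := ih hp' hcard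
    refine ⟨c, hc, fun y hy => ?_⟩
    have hyx : y ≠ x := by rintro rfl; exact hy hx
    rw [hcp y (by rwa [Function.update_of_ne hyx]), Function.update_of_ne hyx]

end Precoloring

section BinomialTree

variable {G : SimpleGraph V}

/-- Independent sets `C 1, C 2, …` in which every vertex of `C j` has a neighbor in each
earlier `C i` are automatically disjoint, so they are the color classes of a precoloring. -/
lemma exists_isGrundyPrecoloring_of_classes (C : ℕ → Set V) (hC : ∀ j, G.IsIndepSet (C j))
    (hdom : ∀ j, ∀ x ∈ C j, ∀ i, 1 ≤ i → i < j → ∃ u ∈ C i, G.Adj x u) :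
    ∃ p, IsGrundyPrecoloring G p ∧ ∀ j, 1 ≤ j → ∀ x ∈ C j, p x = j := by
  classical
  have huniq {i j : ℕ} {x : V} (hi : 1 ≤ i) (hj : 1 ≤ j) (hxi : x ∈ C i) (hxj : x ∈ C j) :
      i = j := by
    by_contra hij
    wlog hlt : i < j generalizing i j
    · exact this hj hi hxj hxi (Ne.symm hij) (by omega)
    obtain ⟨u, hu, hxu⟩ := hdom j x hxj i hi hlt
    exact hC i hxi hu hxu.ne hxu
  let p : V → ℕ := fun x => if h : ∃ j, 1 ≤ j ∧ x ∈ C j then h.choose else 0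
  have hp {j : ℕ} {x : V} (hj : 1 ≤ j) (hx : x ∈ C j) : p x = j := by
    have h : ∃ j, 1 ≤ j ∧ x ∈ C j := ⟨j, hj, hx⟩
    simp only [p, dif_pos h]
    exact huniq h.choose_spec.1 hj h.choose_spec.2 hx
  have hmem {x : V} (hx : p x ≠ 0) : x ∈ C (p x) := by
    by_cases h : ∃ j, 1 ≤ j ∧ x ∈ C j
    · obtain ⟨j, hj, hxj⟩ := h
      rwa [hp hj hxj]
    · simp only [p, dif_neg h, ne_eq, not_true_eq_false] at hx
  refine ⟨p, ⟨fun x y hxy hx hxy' => ?_, fun x j hj hjx => ?_⟩, fun j hj x hx => hp hj hx⟩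
  · have hyC : y ∈ C (p x) := by
      rw [hxy']
      exact hmem (hxy' ▸ hx)
    exact hC _ (hmem hx) hyC hxy.ne hxy
  · obtain ⟨u, hu, hxu⟩ := hdom _ x (hmem (by omega)) j hj hjx
    exact ⟨u, hxu, hp hj hu⟩

/-- The color classes are `{a, b', c₁, c₂'}`, `{b, c₂}`, `{c}` and `{v}`. -/
lemma exists_isGrundyPrecoloring_of_binomialTree {v a b b' c c₁ c₂ c₂' : V}
    (hva : G.Adj v a) (hvb : G.Adj v b) (hvc : G.Adj v c) (hbb' : G.Adj b b')
    (hcc₁ : G.Adj c c₁) (hcc₂ : G.Adj c c₂) (hc₂c₂' : G.Adj c₂ c₂')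
    (h₁ : G.IsIndepSet {a, b', c₁, c₂'}) (h₂ : ¬G.Adj b c₂) :
    ∃ p, IsGrundyPrecoloring G p ∧ p v = 4 := by
  let C : ℕ → Set V
    | 1 => {a, b', c₁, c₂'}
    | 2 => {b, c₂}
    | 3 => {c}
    | 4 => {v}
    | _ => ∅
  have hC : ∀ j, G.IsIndepSet (C j) := by
    rintro (_ | _ | _ | _ | _ | j)
    · exact Set.pairwise_empty _
    · exact h₁
    · exact Set.pairwise_pair.2 fun _ => ⟨h₂, fun h => h₂ h.symm⟩
    · exact Set.pairwise_singleton _ _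
    · exact Set.pairwise_singleton _ _
    · exact Set.pairwise_empty _
  obtain ⟨p, hp, hpC⟩ := exists_isGrundyPrecoloring_of_classes C hC <| by
    rintro (_ | _ | _ | _ | _ | j) x hx i hi hij
    · omega
    · omega
    · obtain rfl : i = 1 := by omega
      rcases hx with rfl | rfl
      exacts [⟨b', by simp [C], hbb'⟩, ⟨c₂', by simp [C], hc₂c₂'⟩]
    · obtain rfl : x = c := hx
      interval_cases i
      exacts [⟨c₁, by simp [C], hcc₁⟩, ⟨c₂, by simp [C], hcc₂⟩]
    · obtain rfl : x = v := hx
      interval_cases i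
      exacts [⟨a, by simp [C], hva⟩, ⟨b, by simp [C], hvb⟩, ⟨c, by simp [C], hvc⟩]
    · exact hx.elim
  exact ⟨p, hp, hpC 4 (by norm_num) v rfl⟩

end BinomialTree

section GrundyNumber

variable {G : SimpleGraph V}

lemma IsGrundyColoring.grundyColorable {c : V → ℕ} (hc : IsGrundyColoring G c) {v : V}
    {k : ℕ} (hv : c v = k) (hle : ∀ x, c x ≤ k) : GrundyColorable G k := by
  refine ⟨c, hc, hle, fun j hj hjk => ?_⟩
  rcases hjk.lt_or_eq with hjk | rfl
  · obtain ⟨u, -, hu⟩ := hc.2.2 v j hj (hv ▸ hjk)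
    exact ⟨u, hu⟩
  · exact ⟨v, hv⟩

lemma le_add_one_of_grundyColorable [G.LocallyFinite] {d k : ℕ}
    (hdeg : ∀ x, G.degree x ≤ d) (hk : GrundyColorable G k) : k ≤ d + 1 := by
  obtain ⟨c, hc, -, hsurj⟩ := hk
  rcases Nat.eq_zero_or_pos k with rfl | hk
  · omega
  obtain ⟨x, rfl⟩ := hsurj k hk le_rfl
  exact (hc.isGrundyPrecoloring.le_degree_add_one x).trans (Nat.add_le_add_right (hdeg x) 1)

lemma IsGrundyPrecoloring.grundyColorable [Finite V] [G.LocallyFinite] {d : ℕ}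
    (hdeg : ∀ x, G.degree x ≤ d) {p : V → ℕ} (hp : IsGrundyPrecoloring G p) {v : V}
    (hv : p v = d + 1) : GrundyColorable G (d + 1) := by
  obtain ⟨c, hc, hcp⟩ := hp.exists_grundyColoring
  exact hc.grundyColorable (by rw [hcp v (by omega), hv]) fun x =>
    (hc.isGrundyPrecoloring.le_degree_add_one x).trans (Nat.add_le_add_right (hdeg x) 1)

end GrundyNumber

section LocalStructure

variable {G : SimpleGraph V}
open SimpleGraph

lemma isIndepSet_quadruple {a b c d : V} (hab : ¬G.Adj a b) (hac : ¬G.Adj a c)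
    (had : ¬G.Adj a d) (hbc : ¬G.Adj b c) (hbd : ¬G.Adj b d) (hcd : ¬G.Adj c d) :
    G.IsIndepSet {a, b, c, d} := by
  simp only [IsIndepSet, Set.pairwise_insert, Set.pairwise_singleton, Set.mem_insert_iff,
    Set.mem_singleton_iff, forall_eq_or_imp, forall_eq]
  exact ⟨⟨⟨trivial, fun _ => ⟨hcd, fun h => hcd h.symm⟩⟩, fun _ => ⟨hbc, fun h => hbc h.symm⟩,
    fun _ => ⟨hbd, fun h => hbd h.symm⟩⟩, fun _ => ⟨hab, fun h => hab h.symm⟩,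
    fun _ => ⟨hac, fun h => hac h.symm⟩, fun _ => ⟨had, fun h => had h.symm⟩⟩

lemma SimpleGraph.IsRegularOfDegree.exists_adj_iff_of_adj [G.LocallyFinite]
    (hreg : G.IsRegularOfDegree 3) {x p : V} (hxp : G.Adj x p) :
    ∃ q r, p ≠ q ∧ p ≠ r ∧ q ≠ r ∧ ∀ s, G.Adj x s ↔ s = p ∨ s = q ∨ s = r := by
  classical
  have hp : p ∈ G.neighborFinset x := (G.mem_neighborFinset x p).2 hxp
  have hcard : ((G.neighborFinset x).erase p).card = 2 := by
    rw [Finset.card_erase_of_mem hp, card_neighborFinset_eq_degree, hreg x]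
  obtain ⟨q, r, hqr, hqr'⟩ := Finset.card_eq_two.1 hcard
  have hmem (s : V) : G.Adj x s ↔ s = p ∨ s ∈ (G.neighborFinset x).erase p := by
    rw [Finset.mem_erase, mem_neighborFinset]
    by_cases hs : s = p <;> simp [hs, hxp]
  have hq : q ∈ (G.neighborFinset x).erase p := by simp [hqr']
  have hr : r ∈ (G.neighborFinset x).erase p := by simp [hqr']
  exact ⟨q, r, (Finset.ne_of_mem_erase hq).symm, (Finset.ne_of_mem_erase hr).symm, hqr,
    fun s => by simp [hmem, hqr']⟩

lemma SimpleGraph.IsRegularOfDegree.exists_adj_iff_of_adj_of_adj [G.LocallyFinite]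
    (hreg : G.IsRegularOfDegree 3) {x p q : V} (hxp : G.Adj x p) (hxq : G.Adj x q)
    (hpq : p ≠ q) : ∃ r, p ≠ r ∧ q ≠ r ∧ ∀ s, G.Adj x s ↔ s = p ∨ s = q ∨ s = r := by
  obtain ⟨q', r', hpq', hpr', hqr', hx⟩ := hreg.exists_adj_iff_of_adj hxp
  rcases (hx q).1 hxq with rfl | rfl | rfl
  · exact absurd rfl hpq
  · exact ⟨r', hpr', hqr', hx⟩
  · exact ⟨q', hpq', hqr'.symm, fun s => by rw [hx s]; tauto⟩

lemma SimpleGraph.IsRegularOfDegree.eq_of_adj_of_ne [G.LocallyFinite]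
    (hreg : G.IsRegularOfDegree 3) {x p q y y' : V} (hxp : G.Adj x p) (hxq : G.Adj x q)
    (hpq : p ≠ q) (hxy : G.Adj x y) (hxy' : G.Adj x y') (hyp : y ≠ p) (hyq : y ≠ q)
    (hy'p : y' ≠ p) (hy'q : y' ≠ q) : y = y' := by
  obtain ⟨r, -, -, hx⟩ := hreg.exists_adj_iff_of_adj_of_adj hxp hxq hpq
  rcases (hx y).1 hxy with rfl | rfl | rfl <;> rcases (hx y').1 hxy' with rfl | rfl | rfl <;>
    first | rfl | contradiction

lemma SimpleGraph.IsRegularOfDegree.exists_adj_ne_not_adj [G.LocallyFinite]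
    (hreg : G.IsRegularOfDegree 3) {x u t p q : V} (hxu : G.Adj x u) (htp : G.Adj t p)
    (htq : G.Adj t q) (hpq : p ≠ q) (hxp : ¬G.Adj x p) (hxq : ¬G.Adj x q) :
    ∃ y, G.Adj x y ∧ u ≠ y ∧ ¬G.Adj t y := by
  obtain ⟨y₁, y₂, huy₁, huy₂, hy₁y₂, hx⟩ := hreg.exists_adj_iff_of_adj hxu
  have hxy₁ : G.Adj x y₁ := (hx y₁).2 (by simp)
  have hxy₂ : G.Adj x y₂ := (hx y₂).2 (by simp)
  have hp {y : V} (hxy : G.Adj x y) : y ≠ p := by rintro rfl; exact hxp hxy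
  have hq {y : V} (hxy : G.Adj x y) : y ≠ q := by rintro rfl; exact hxq hxy
  by_cases hty₁ : G.Adj t y₁
  · exact ⟨y₂, hxy₂, huy₂, fun hty₂ => hy₁y₂ (hreg.eq_of_adj_of_ne htp htq hpq hty₁ hty₂
      (hp hxy₁) (hq hxy₁) (hp hxy₂) (hq hxy₂))⟩
  · exact ⟨y₁, hxy₁, huy₁, hty₁⟩

lemma adj_of_not_hasInducedC4 (hC4 : ¬HasInducedC4 G) {x y z t : V} (hxz : x ≠ z)
    (hyt : y ≠ t) (hxy : G.Adj x y) (hyz : G.Adj y z) (hzt : G.Adj z t) (htx : G.Adj t x)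
    (hnxz : ¬G.Adj x z) : G.Adj y t := by
  by_contra hnyt
  exact hC4 ⟨x, y, z, t, hxy.ne, hxz, htx.ne', hyz.ne, hyt, hzt.ne, hxy, hyz, hzt, htx, hnxz, hnyt⟩

lemma not_adj_of_cliqueFree_three (hC3 : G.CliqueFree 3) {x y z : V} (hxy : G.Adj x y)
    (hyz : G.Adj y z) : ¬G.Adj z x := fun hzx => by
  classical
  exact hC3 {x, y, z} (is3Clique_triple_iff.2 ⟨hxy, hzx.symm, hyz⟩)

lemma not_adj_of_cliqueFree_three_of_not_hasInducedC4 (hC3 : G.CliqueFree 3)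
    (hC4 : ¬HasInducedC4 G) {x y z t : V} (hxz : x ≠ z) (hyt : y ≠ t) (hxy : G.Adj x y)
    (hyz : G.Adj y z) (hzt : G.Adj z t) : ¬G.Adj t x := fun htx => by
  by_cases hnxz : G.Adj x z
  · exact not_adj_of_cliqueFree_three hC3 hxy hyz hnxz.symm
  · exact not_adj_of_cliqueFree_three hC3 hxy
      (adj_of_not_hasInducedC4 hC4 hxz hyt hxy hyz hzt htx hnxz) htx

lemma exists_adj_ne_not_adj_of_cliqueFree_three [G.LocallyFinite]
    (hreg : G.IsRegularOfDegree 3) (hC3 : G.CliqueFree 3) (hC4 : ¬HasInducedC4 G)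
    {x u t : V} (hxu : G.Adj x u) (hxt : x ≠ t) : ∃ y, G.Adj x y ∧ u ≠ y ∧ ¬G.Adj t y := by
  obtain ⟨y₁, y₂, huy₁, huy₂, hy₁y₂, hx⟩ := hreg.exists_adj_iff_of_adj hxu
  have hxy₁ : G.Adj x y₁ := (hx y₁).2 (by simp)
  have hxy₂ : G.Adj x y₂ := (hx y₂).2 (by simp)
  by_cases hty₁ : G.Adj t y₁
  · exact ⟨y₂, hxy₂, huy₂, fun hty₂ => not_adj_of_cliqueFree_three_of_not_hasInducedC4 hC3 hC4
      hy₁y₂ hxt hxy₁.symm hxy₂ hty₂.symm hty₁⟩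
  · exact ⟨y₁, hxy₁, huy₁, hty₁⟩

end LocalStructure

section Witness

variable {G : SimpleGraph V} [G.LocallyFinite]
open SimpleGraph

lemma exists_isGrundyPrecoloring_of_triangle_of_not_adj (hreg : G.IsRegularOfDegree 3)
    (hC4 : ¬HasInducedC4 G) {v a b c : V} (hva : G.Adj v a) (hvb : G.Adj v b)
    (hab : G.Adj a b) (hac : a ≠ c) (hbc : b ≠ c)
    (hv : ∀ s, G.Adj v s ↔ s = a ∨ s = b ∨ s = c) (hnbc : ¬G.Adj b c) :
    ∃ p, IsGrundyPrecoloring G p ∧ p v = 4 := by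
  have hvc : G.Adj v c := (hv c).2 (by simp)
  obtain ⟨c₁, c₂, hvc₁, hvc₂, hc₁c₂, hc₂a, hc⟩ : ∃ c₁ c₂, v ≠ c₁ ∧ v ≠ c₂ ∧ c₁ ≠ c₂ ∧ c₂ ≠ a ∧
      ∀ s, G.Adj c s ↔ s = v ∨ s = c₁ ∨ s = c₂ := by
    obtain ⟨q, r, hvq, hvr, hqr, hc⟩ := hreg.exists_adj_iff_of_adj hvc.symm
    by_cases hra : r = a
    · exact ⟨r, q, hvr, hvq, hqr.symm, hra ▸ hqr, fun s => by rw [hc]; tauto⟩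
    · exact ⟨q, r, hvq, hvr, hqr, hra, hc⟩
  have hcc₁ : G.Adj c c₁ := (hc c₁).2 (by simp)
  have hcc₂ : G.Adj c c₂ := (hc c₂).2 (by simp)
  have hnvc₂ : ¬G.Adj v c₂ := by
    intro h
    rcases (hv c₂).1 h with rfl | rfl | rfl
    exacts [hc₂a rfl, hnbc hcc₂.symm, G.irrefl hcc₂]
  have hbc₂ : ¬G.Adj b c₂ := fun h =>
    hnvc₂ (adj_of_not_hasInducedC4 hC4 hbc hvc₂ hvb.symm hvc hcc₂ h.symm hnbc)
  have hac₁ : ¬G.Adj a c₁ := by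
    intro hac₁
    have hc₁b : c₁ ≠ b := by
      rintro rfl
      exact hnbc hcc₁.symm
    by_cases hac' : G.Adj a c
    · -- then `a` would have the four neighbors `v, b, c, c₁`
      exact G.irrefl (hreg.eq_of_adj_of_ne hva.symm hab hvb.ne hac' hac₁ hvc.ne' hbc.symm
        hvc₁.symm hc₁b ▸ hcc₁)
    · have hvc₁' := adj_of_not_hasInducedC4 hC4 hac hvc₁ hva.symm hvc hcc₁ hac₁.symm hac'
      rcases (hv c₁).1 hvc₁' with rfl | rfl | rfl
      exacts [G.irrefl hac₁, hc₁b rfl, G.irrefl hcc₁]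
  obtain ⟨y, hc₂y, hay, hc₁y⟩ : ∃ y, G.Adj c₂ y ∧ ¬G.Adj a y ∧ ¬G.Adj c₁ y := by
    by_cases hc₁c₂' : G.Adj c₁ c₂
    · exact ⟨c₁, hc₁c₂'.symm, hac₁, G.irrefl⟩
    obtain ⟨y, hc₂y, hcy, hay⟩ := hreg.exists_adj_ne_not_adj hcc₂.symm hva.symm hab hvb.ne
      (fun h => hnvc₂ h.symm) (fun h => hbc₂ h.symm)
    refine ⟨y, hc₂y, hay, fun hc₁y => ?_⟩
    rcases (hc y).1 (adj_of_not_hasInducedC4 hC4 hc₁c₂ hcy hcc₁.symm hcc₂ hc₂y hc₁y.symm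
      hc₁c₂') with rfl | rfl | rfl
    exacts [hnvc₂ hc₂y.symm, hc₁c₂' hc₂y.symm, G.irrefl hc₂y]
  exact exists_isGrundyPrecoloring_of_binomialTree hva hvb hvc hab.symm hcc₁ hcc₂ hc₂y
    (isIndepSet_quadruple G.irrefl hac₁ hay hac₁ hay hc₁y) hbc₂

lemma exists_isGrundyPrecoloring_of_triangle (hreg : G.IsRegularOfDegree 3)
    (hC4 : ¬HasInducedC4 G) {v a b : V} (hva : G.Adj v a) (hvb : G.Adj v b)
    (hab : G.Adj a b) : ∃ p, IsGrundyPrecoloring G p ∧ p v = 4 := by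
  obtain ⟨c, hac, hbc, hv⟩ := hreg.exists_adj_iff_of_adj_of_adj hva hvb hab.ne
  have hvc : G.Adj v c := (hv c).2 (by simp)
  by_cases hbc' : G.Adj b c
  · by_cases hac' : G.Adj a c
    · exact exists_isGrundyPrecoloring_of_binomialTree hva hvb hvc hab.symm hac'.symm
        hbc'.symm hab.symm (isIndepSet_quadruple G.irrefl G.irrefl G.irrefl G.irrefl
          G.irrefl G.irrefl) G.irrefl
    · exact exists_isGrundyPrecoloring_of_triangle_of_not_adj hreg hC4 hvb hva hab.symm hbc
        hac (fun s => by rw [hv s]; tauto) hac'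
  · exact exists_isGrundyPrecoloring_of_triangle_of_not_adj hreg hC4 hva hvb hab hac hbc hv hbc'

lemma exists_isGrundyPrecoloring_of_cliqueFree_three (hreg : G.IsRegularOfDegree 3)
    (hC3 : G.CliqueFree 3) (hC4 : ¬HasInducedC4 G) (v : V) :
    ∃ p, IsGrundyPrecoloring G p ∧ p v = 4 := by
  have hpath := @not_adj_of_cliqueFree_three_of_not_hasInducedC4 _ G hC3 hC4
  obtain ⟨a, hva⟩ := (G.degree_pos_iff_exists_adj v).1 (by rw [hreg v]; norm_num)
  obtain ⟨b, c, hab, hac, hbc, hv⟩ := hreg.exists_adj_iff_of_adj hva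
  have hvb : G.Adj v b := (hv b).2 (by simp)
  have hvc : G.Adj v c := (hv c).2 (by simp)
  obtain ⟨c₁, c₂, hvc₁, hvc₂, hc₁c₂, hc⟩ := hreg.exists_adj_iff_of_adj hvc.symm
  have hcc₁ : G.Adj c c₁ := (hc c₁).2 (by simp)
  have hcc₂ : G.Adj c c₂ := (hc c₂).2 (by simp)
  have hnc₁ {x : V} (hvx : G.Adj v x) (hcx : c ≠ x) : ¬G.Adj x c₁ :=
    hpath hvc₁.symm hcx hcc₁.symm hvc.symm hvx
  have hnc₂ {x : V} (hvx : G.Adj v x) (hcx : c ≠ x) : ¬G.Adj x c₂ :=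
    hpath hvc₂.symm hcx hcc₂.symm hvc.symm hvx
  have hc₁z {z : V} (hc₂z : G.Adj c₂ z) (hcz : c ≠ z) : ¬G.Adj c₁ z :=
    hpath hcz.symm hc₁c₂.symm hc₂z.symm hcc₂.symm hcc₁
  have hvz {z : V} (hc₂z : G.Adj c₂ z) : v ≠ z := by
    rintro rfl
    exact not_adj_of_cliqueFree_three hC3 hvc hcc₂ hc₂z
  -- If `a` sees a neighbor `z ≠ c` of `c₂`, swap the roles of `a` and `b`: then `z` is both
  -- the child of `b` and the child of `c₂` in the binomial tree.
  by_cases ha : ∃ z, G.Adj c₂ z ∧ c ≠ z ∧ G.Adj a z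
  · obtain ⟨z, hc₂z, hcz, haz⟩ := ha
    refine exists_isGrundyPrecoloring_of_binomialTree hvb hva hvc haz hcc₁ hcc₂ hc₂z
      (isIndepSet_quadruple ?_ (hnc₁ hvb hbc.symm) ?_ (fun h => hc₁z hc₂z hcz h.symm) G.irrefl
        (hc₁z hc₂z hcz)) (hnc₂ hva hac.symm)
    all_goals exact hpath (hvz hc₂z).symm hab haz.symm hva.symm hvb
  simp only [not_exists, not_and] at ha
  have hbc₁ : b ≠ c₁ := by
    rintro rfl
    exact not_adj_of_cliqueFree_three hC3 hvc hcc₁ hvb.symm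
  obtain ⟨b', hbb', hvb', hc₁b'⟩ :=
    exists_adj_ne_not_adj_of_cliqueFree_three hreg hC3 hC4 hvb.symm hbc₁
  have hc₂b' : c₂ ≠ b' := by
    rintro rfl
    exact hnc₂ hvb hbc.symm hbb'
  obtain ⟨z, hc₂z, hcz, hb'z⟩ :=
    exists_adj_ne_not_adj_of_cliqueFree_three hreg hC3 hC4 hcc₂.symm hc₂b'
  refine exists_isGrundyPrecoloring_of_binomialTree hva hvb hvc hbb' hcc₁ hcc₂ hc₂z
    (isIndepSet_quadruple ?_ (hnc₁ hva hac.symm) (ha z hc₂z hcz) (fun h => hc₁b' h.symm) hb'z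
      (hc₁z hc₂z hcz)) (hnc₂ hvb hbc.symm)
  exact hpath hvb'.symm hab.symm hbb'.symm hvb.symm hva

lemma exists_isGrundyPrecoloring_four [Nonempty V]
    (hreg : G.IsRegularOfDegree 3) (hC4 : ¬HasInducedC4 G) :
    ∃ p v, IsGrundyPrecoloring G p ∧ p v = 4 := by
  classical
  by_cases hC3 : G.CliqueFree 3
  · obtain ⟨v⟩ := ‹Nonempty V›
    obtain ⟨p, hp, hpv⟩ := exists_isGrundyPrecoloring_of_cliqueFree_three hreg hC3 hC4 v
    exact ⟨p, v, hp, hpv⟩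
  · obtain ⟨s, hs⟩ : ∃ s, G.IsNClique 3 s := by simpa [CliqueFree] using hC3
    obtain ⟨v, a, b, hva, hvb, hab, -⟩ := is3Clique_iff.1 hs
    obtain ⟨p, hp, hpv⟩ := exists_isGrundyPrecoloring_of_triangle hreg hC4 hva hvb hab
    exact ⟨p, v, hp, hpv⟩

end Witness

theorem cubic_c4_free_grundy {V : Type*} [Fintype V] [Nonempty V]
    (G : SimpleGraph V) [DecidableRel G.Adj]
    (hreg : G.IsRegularOfDegree 3) (hC4 : ¬ HasInducedC4 G) :
    grundy G = 4 := by
  have hdeg : ∀ x, G.degree x ≤ 3 := fun x => (hreg x).le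
  obtain ⟨p, v, hp, hpv⟩ := exists_isGrundyPrecoloring_four hreg hC4
  exact IsGreatest.csSup_eq
    ⟨hp.grundyColorable hdeg hpv, fun k hk => le_add_one_of_grundyColorable hdeg hk⟩
end

section
/- For all integers r ≥ 4 and 3 ≤ k ≤ r+1, there exist arbitrarily large connected r-regular graphs G with Γ(G) = k. -/
variable {V : Type*}

/-!
The graph is a cycle of `2m` copies of a complete multipartite graph with `k - 1` parts, each part
of each copy completely joined to the same part of one neighbouring copy. The vertices of a part
of a copy are twins, so every Grundy coloring is constant on them and the Grundy number is that
of the quotient graph, a `(k - 1)`-regular cycle of cliques; hence `Γ ≤ k`. Conversely, color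
each copy bijectively by `1, …, k - 1` so that joined parts get different colors, except part `0`
between copies `0, 1` and between copies `2, 3`: then part `0` of copies `0` and `2` sees all of
`1, …, k - 1` and can be recolored `k`.
-/
open Finset Function

section GrundyColoring

variable {W : Type*} {G : SimpleGraph V} {c : V → ℕ}

theorem IsGrundyColoring.eq_of_forall_adj_iff (hc : IsGrundyColoring G c) {u w : V}
    (h : ∀ z, G.Adj u z ↔ G.Adj w z) : c u = c w := by
  by_contra hne
  wlog hlt : c u < c w generalizing u w
  · exact this (fun z => (h z).symm) (Ne.symm hne) (by omega)
  obtain ⟨z, hwz, hz⟩ := hc.2.2 w (c u) (hc.1 u) hlt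
  exact hc.2.1 u z ((h z).2 hwz) hz.symm

theorem IsGrundyColoring.le_degree_add_one (hc : IsGrundyColoring G c) (v : V)
    [Fintype (G.neighborSet v)] : c v ≤ G.degree v + 1 := by
  have hneed : ∀ i ∈ Icc 1 (c v - 1), ∃ u, G.Adj v u ∧ c u = i := fun i hi =>
    hc.2.2 v i (mem_Icc.1 hi).1 (by have := (mem_Icc.1 hi).2; have := hc.1 v; omega)
  have : Nonempty V := ⟨v⟩
  choose! u hu using hneed
  have hcard := card_le_card_of_injOn u
    (fun i hi => (G.mem_neighborFinset v _).2 (hu i hi).1)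
    (fun i hi j hj hij => (hu i hi).2.symm.trans (hij ▸ (hu j hj).2))
  rw [Nat.card_Icc, G.card_neighborFinset_eq_degree] at hcard
  omega

theorem grundy_eq_of_forall_le {k : ℕ} (hk : GrundyColorable G k)
    (hle : ∀ c, IsGrundyColoring G c → ∀ v, c v ≤ k) : grundy G = k := by
  refine IsGreatest.csSup_eq ⟨hk, ?_⟩
  rintro m ⟨c, hc, -, hsurj⟩
  rcases Nat.eq_zero_or_pos m with rfl | hm
  · exact Nat.zero_le k
  · obtain ⟨v, rfl⟩ := hsurj _ hm le_rfl
    exact hle c hc v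

variable {H : SimpleGraph W} {π : V → W}

/-- `H.comap π` blows each vertex of `H` up into an independent set of twins, and twins get
equal colors in every Grundy coloring. -/
theorem grundyColorable_comap_iff (hπ : Surjective π) {k : ℕ} :
    GrundyColorable (H.comap π) k ↔ GrundyColorable H k := by
  have hsec : ∀ w, π (surjInv hπ w) = w := surjInv_eq hπ
  constructor
  · rintro ⟨c, hc, hle, hsurj⟩
    have hfib : ∀ x, c (surjInv hπ (π x)) = c x := fun x =>
      hc.eq_of_forall_adj_iff fun z => by simp only [SimpleGraph.comap_adj, hsec]
    refine ⟨c ∘ surjInv hπ, ⟨fun w => hc.1 _, fun w w' h => hc.2.1 _ _ ?_, ?_⟩,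
      fun w => hle _, fun j hj hjk => ?_⟩
    · simpa only [SimpleGraph.comap_adj, hsec] using h
    · intro w j hj hjc
      obtain ⟨z, hz, rfl⟩ := hc.2.2 _ j hj hjc
      exact ⟨π z, by simpa only [SimpleGraph.comap_adj, hsec] using hz, hfib z⟩
    · obtain ⟨v, rfl⟩ := hsurj j hj hjk
      exact ⟨π v, hfib v⟩
  · rintro ⟨c, hc, hle, hsurj⟩
    refine ⟨c ∘ π, ⟨fun v => hc.1 _, fun v w h => hc.2.1 _ _ h, ?_⟩,
      fun v => hle _, fun j hj hjk => ?_⟩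
    · intro v j hj hjc
      obtain ⟨w, hw, rfl⟩ := hc.2.2 _ j hj hjc
      exact ⟨surjInv hπ w, by simpa only [SimpleGraph.comap_adj, hsec] using hw,
        by simp only [comp_apply, hsec]⟩
    · obtain ⟨w, rfl⟩ := hsurj j hj hjk
      exact ⟨surjInv hπ w, by simp only [comp_apply, hsec]⟩

theorem grundy_comap (hπ : Surjective π) : grundy (H.comap π) = grundy H := by
  simp only [grundy, grundyColorable_comap_iff hπ]

end GrundyColoring

/-- The copy joined to copy `t` along part `j`, in a cycle of `2 * m` copies: part `0` is joined
across the copy pairs `{2s, 2s + 1}`, every other part across the pairs `{2s + 1, 2s + 2}`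
(mod `2 * m`), so each part of each copy is joined to exactly one neighbouring copy. -/
def partnerCopy (m t j : ℕ) : ℕ :=
  if (j = 0 ↔ t % 2 = 0) then (if t + 1 = 2 * m then 0 else t + 1)
  else (if t = 0 then 2 * m - 1 else t - 1)

section PartnerCopy

variable {m t : ℕ}

theorem partnerCopy_lt (ht : t < 2 * m) (j : ℕ) : partnerCopy m t j < 2 * m := by
  unfold partnerCopy; split_ifs <;> omega

theorem partnerCopy_ne (ht : t < 2 * m) (j : ℕ) : partnerCopy m t j ≠ t := by
  unfold partnerCopy; split_ifs <;> omega

theorem partnerCopy_partnerCopy (ht : t < 2 * m) (j : ℕ) :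
    partnerCopy m (partnerCopy m t j) j = t := by
  grind [partnerCopy]

end PartnerCopy

/-- `2 * m` copies of the complete multipartite graph whose parts are the fibres of `f`, each part
of copy `t` being completely joined to the same part of its partner copy. -/
def multipartiteCycle {p r : ℕ} (m : ℕ) (f : Fin r → Fin p) :
    SimpleGraph (Fin (2 * m) × Fin r) where
  Adj x y := (x.1 = y.1 ∧ f x.2 ≠ f y.2) ∨
    (f x.2 = f y.2 ∧ y.1.val = partnerCopy m x.1 (f x.2))
  symm := ⟨by
    rintro x y (⟨h1, h2⟩ | ⟨h1, h2⟩)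
    · exact Or.inl ⟨h1.symm, Ne.symm h2⟩
    · refine Or.inr ⟨h1.symm, ?_⟩
      rw [← h1, h2, partnerCopy_partnerCopy x.1.isLt]⟩
  loopless := ⟨by
    rintro x (⟨-, h⟩ | ⟨-, h⟩)
    · exact h rfl
    · exact partnerCopy_ne x.1.isLt _ h.symm⟩

namespace multipartiteCycle

variable {p r m : ℕ} {f : Fin r → Fin p}

instance : DecidableRel (multipartiteCycle m f).Adj := fun _ _ =>
  inferInstanceAs (Decidable (_ ∨ _))

theorem neighborFinset_eq (v : Fin (2 * m) × Fin r) :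
    (multipartiteCycle m f).neighborFinset v = univ.image fun b =>
      (if f b = f v.2 then ⟨partnerCopy m v.1 (f v.2), partnerCopy_lt v.1.isLt _⟩ else v.1,
        b) := by
  ext ⟨t, b⟩
  simp only [SimpleGraph.mem_neighborFinset, mem_image, mem_univ, true_and, Prod.mk.injEq]
  constructor
  · rintro (⟨rfl, h⟩ | ⟨h, h'⟩)
    · exact ⟨b, by rw [if_neg (Ne.symm h)], rfl⟩
    · exact ⟨b, by rw [if_pos h.symm]; exact Fin.ext h'.symm, rfl⟩
  · rintro ⟨b, h, rfl⟩
    split_ifs at h with hb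
    · exact Or.inr ⟨hb.symm, by rw [← h]⟩
    · exact Or.inl ⟨h, Ne.symm hb⟩

theorem isRegularOfDegree : (multipartiteCycle m f).IsRegularOfDegree r := fun v => by
  rw [← SimpleGraph.card_neighborFinset_eq_degree, neighborFinset_eq,
    card_image_of_injective _ fun _ _ h => (Prod.mk.inj h).2, card_univ, Fintype.card_fin]

theorem reachable_same_copy (hp : 2 ≤ p) (hf : Surjective f) (t : Fin (2 * m)) (a b : Fin r) :
    (multipartiteCycle m f).Reachable (t, a) (t, b) := by
  by_cases hab : f a = f b
  · have : Nontrivial (Fin p) := Fin.nontrivial_iff_two_le.2 hp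
    obtain ⟨c, hc⟩ := hf (exists_ne (f a)).choose
    have hne : f a ≠ f c := by rw [hc]; exact (exists_ne (f a)).choose_spec.symm
    have hac : (multipartiteCycle m f).Adj (t, a) (t, c) := Or.inl ⟨rfl, hne⟩
    have hcb : (multipartiteCycle m f).Adj (t, c) (t, b) := Or.inl ⟨rfl, hab ▸ hne.symm⟩
    exact hac.reachable.trans hcb.reachable
  · exact SimpleGraph.Adj.reachable (G := multipartiteCycle m f) (Or.inl ⟨rfl, hab⟩)

theorem reachable_succ (hp : 2 ≤ p) (hf : Surjective f) {t : ℕ} (ht : t + 1 < 2 * m)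
    (a b : Fin r) :
    (multipartiteCycle m f).Reachable (⟨t, by omega⟩, a) (⟨t + 1, ht⟩, b) := by
  obtain ⟨c, hc⟩ := hf ⟨t % 2, by omega⟩
  have hlink : (multipartiteCycle m f).Adj (⟨t, by omega⟩, c) (⟨t + 1, ht⟩, c) := by
    refine Or.inr ⟨rfl, ?_⟩
    simp only [partnerCopy, hc]
    split_ifs <;> omega
  exact (reachable_same_copy hp hf _ a c).trans
    (hlink.reachable.trans (reachable_same_copy hp hf _ c b))

theorem connected (hp : 2 ≤ p) (hf : Surjective f) (hm : 1 ≤ m) :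
    (multipartiteCycle m f).Connected := by
  obtain ⟨a⟩ : Nonempty (Fin r) := (hf ⟨0, by omega⟩).nonempty
  rw [SimpleGraph.connected_iff_exists_forall_reachable]
  refine ⟨(⟨0, by omega⟩, a), fun ⟨⟨t, ht⟩, b⟩ => ?_⟩
  induction t generalizing b with
  | zero => exact reachable_same_copy hp hf _ a b
  | succ t ih => exact (ih (by omega) a).trans (reachable_succ hp hf ht a b)

end multipartiteCycle

/-- The color of part `j` of copy `t`. Copies `2, 3` use a bijection differing from `j ↦ j` on
every part `≥ 1` (for `q = 1` only the shift does); otherwise copy `1` and the even copies use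
`j ↦ j` with part `0` moved to the top color `q + 1`, and the odd copies the shift `j ↦ j + 1`.
So the parts joined between partner copies get different colors, except part `0` between
copies `0, 1` and between copies `2, 3`. -/
def copyColoring (q t j : ℕ) : ℕ :=
  if t = 2 ∨ t = 3 then
    (if q = 1 then j + 1 else if j = 0 then q + 1 else if j = q then 1 else j + 1)
  else if t = 1 ∨ t % 2 = 0 then (if j = 0 then q + 1 else j)
  else j + 1

/-- Part `0` of copies `0` and `2` is recolored `q + 2`: its partner in copy `1`, resp. `3`,
carries the one color of `1, …, q + 1` missing from the rest of its own copy. -/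
def cycleColoring (q t j : ℕ) : ℕ :=
  if j = 0 ∧ (t = 0 ∨ t = 2) then q + 2 else copyColoring q t j

section CycleColoring

variable {q t j : ℕ}

theorem copyColoring_mem (hj : j ≤ q) : copyColoring q t j ∈ Icc 1 (q + 1) := by
  rw [mem_Icc]; unfold copyColoring; split_ifs <;> omega

theorem copyColoring_inj {j' : ℕ} (hj : j ≤ q) (hj' : j' ≤ q)
    (h : copyColoring q t j = copyColoring q t j') : j = j' := by
  unfold copyColoring at h; split_ifs at h <;> omega

theorem exists_copyColoring_eq {i : ℕ} (hi : i ∈ Icc 1 (q + 1)) :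
    ∃ j ≤ q, copyColoring q t j = i := by
  obtain ⟨j, hj, rfl⟩ := surjOn_of_injOn_of_card_le (s := range (q + 1)) (copyColoring q t)
    (fun j hj => copyColoring_mem (Nat.lt_succ_iff.1 (mem_range.1 hj)))
    (fun j hj j' hj' => copyColoring_inj (Nat.lt_succ_iff.1 (mem_range.1 hj))
      (Nat.lt_succ_iff.1 (mem_range.1 hj')))
    (by simp) hi
  exact ⟨j, Nat.lt_succ_iff.1 (mem_range.1 hj), rfl⟩

theorem cycleColoring_ne_of_ne {j' : ℕ} (hj : j ≤ q) (hj' : j' ≤ q) (hne : j ≠ j') :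
    cycleColoring q t j ≠ cycleColoring q t j' := by
  have := mem_Icc.1 (copyColoring_mem (t := t) hj)
  have := mem_Icc.1 (copyColoring_mem (t := t) hj')
  have := fun h => hne (copyColoring_inj (t := t) hj hj' h)
  unfold cycleColoring; split_ifs <;> omega

theorem cycleColoring_ne_of_link {u : ℕ} (hq : 1 ≤ q) (hlink : j = 0 ↔ t % 2 = 0)
    (hu : u = t + 1 ∨ (u = 0 ∧ 3 ≤ t)) : cycleColoring q t j ≠ cycleColoring q u j := by
  grind [cycleColoring, copyColoring]

theorem cycleColoring_ne_partnerCopy {m : ℕ} (hq : 1 ≤ q) (hm : 2 ≤ m) :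
    cycleColoring q t j ≠ cycleColoring q (partnerCopy m t j) j := by
  by_cases hlink : j = 0 ↔ t % 2 = 0
  · refine cycleColoring_ne_of_link hq hlink ?_
    unfold partnerCopy; rw [if_pos hlink]; split_ifs <;> omega
  · refine (cycleColoring_ne_of_link hq ?_ ?_).symm <;>
      unfold partnerCopy <;> rw [if_neg hlink] <;> split_ifs <;> omega

end CycleColoring

section GrundyNumber

variable {q m : ℕ}

theorem cycleColoring_proper (hq : 1 ≤ q) (hm : 2 ≤ m) (x y : Fin (2 * m) × Fin (q + 1))
    (h : (multipartiteCycle m (id : Fin (q + 1) → Fin (q + 1))).Adj x y) :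
    cycleColoring q x.1 x.2 ≠ cycleColoring q y.1 y.2 := by
  rcases h with ⟨h1, h2⟩ | ⟨h1, h2⟩
  · rw [← h1]
    exact cycleColoring_ne_of_ne (Nat.lt_succ_iff.1 x.2.isLt) (Nat.lt_succ_iff.1 y.2.isLt)
      (Fin.val_ne_of_ne h2)
  · simp only [id] at h1 h2
    rw [h2, ← h1]
    exact cycleColoring_ne_partnerCopy hq hm

theorem cycleColoring_exists_adj (hm : 2 ≤ m) (t : Fin (2 * m)) (j : Fin (q + 1))
    (i : ℕ) (hi : 1 ≤ i) (hit : i < cycleColoring q t j) :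
    ∃ y, (multipartiteCycle m (id : Fin (q + 1) → Fin (q + 1))).Adj (t, j) y ∧
      cycleColoring q y.1 y.2 = i := by
  have ht := t.isLt
  have hj := j.isLt
  have hiq : i ≤ q + 1 := by
    have := mem_Icc.1 (copyColoring_mem (t := t) (Nat.lt_succ_iff.1 hj))
    unfold cycleColoring at hit; split_ifs at hit <;> omega
  obtain ⟨j', hj', hj'i⟩ := exists_copyColoring_eq (t := t) (mem_Icc.2 ⟨hi, hiq⟩)
  have hsame : j' ≠ j → ¬(j' = 0 ∧ (t.val = 0 ∨ t.val = 2)) →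
      ∃ y, (multipartiteCycle m (id : Fin (q + 1) → Fin (q + 1))).Adj (t, j) y ∧
        cycleColoring q y.1 y.2 = i := fun hne hs =>
    ⟨(t, ⟨j', by omega⟩), Or.inl ⟨rfl, fun h => hne (congrArg Fin.val h).symm⟩,
      by simp only [cycleColoring, if_neg hs, hj'i]⟩
  by_cases hs : j.val = 0 ∧ (t.val = 0 ∨ t.val = 2)
  · by_cases hj'0 : j' = 0
    · subst hj'0
      refine ⟨(⟨t + 1, by omega⟩, j), Or.inr ⟨rfl, ?_⟩, ?_⟩
      · show t.val + 1 = partnerCopy m t j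
        rw [hs.1]; unfold partnerCopy; split_ifs <;> omega
      · show cycleColoring q (t + 1) j = i
        rw [hs.1, ← hj'i]; rcases hs.2 with h | h <;> rw [h] <;> rfl
    · exact hsame (by omega) (by omega)
  · rw [cycleColoring, if_neg hs] at hit
    have hne : j' ≠ j := by rintro rfl; omega
    by_cases hs' : j' = 0 ∧ (t.val = 0 ∨ t.val = 2)
    · -- `i` is the color lost by the recoloring: this only happens in copy `2` when `q = 1`
      have hq1 : t.val = 2 ∧ q = 1 ∧ j.val = 1 := by
        have := mem_Icc.1 (copyColoring_mem (t := t) (Nat.lt_succ_iff.1 hj))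
        rw [hs'.1] at hj'i
        grind [copyColoring]
      refine ⟨(⟨1, by omega⟩, j), Or.inr ⟨rfl, ?_⟩, ?_⟩
      · show 1 = partnerCopy m t j
        rw [hq1.1, hq1.2.2]; rfl
      · show cycleColoring q 1 j = i
        rw [← hj'i, hq1.1, hs'.1, hq1.2.2, hq1.2.1]; rfl
    · exact hsame hne hs'

theorem isGrundyKColoring_cycleColoring (hq : 1 ≤ q) (hm : 2 ≤ m) :
    IsGrundyKColoring (multipartiteCycle m (id : Fin (q + 1) → Fin (q + 1)))
      (fun x => cycleColoring q x.1 x.2) (q + 2) := by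
  have hle : ∀ x : Fin (2 * m) × Fin (q + 1), cycleColoring q x.1 x.2 ∈ Icc 1 (q + 2) := by
    intro x
    have := mem_Icc.1 (copyColoring_mem (t := x.1) (Nat.lt_succ_iff.1 x.2.isLt))
    rw [mem_Icc]; unfold cycleColoring; split_ifs <;> omega
  refine ⟨⟨fun x => (mem_Icc.1 (hle x)).1, cycleColoring_proper hq hm,
    fun x => cycleColoring_exists_adj hm x.1 x.2⟩, fun x => (mem_Icc.1 (hle x)).2,
    fun i hi hiq => ?_⟩
  rcases hiq.lt_or_eq with hiq | rfl
  · obtain ⟨j, hj, hji⟩ :=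
      exists_copyColoring_eq (q := q) (t := 1) (mem_Icc.2 ⟨hi, by omega⟩)
    exact ⟨(⟨1, by omega⟩, ⟨j, by omega⟩), by simpa [cycleColoring] using hji⟩
  · exact ⟨(⟨0, by omega⟩, 0), by simp [cycleColoring]⟩

theorem grundy_multipartiteCycle_id (hq : 1 ≤ q) (hm : 2 ≤ m) :
    grundy (multipartiteCycle m (id : Fin (q + 1) → Fin (q + 1))) = q + 2 :=
  grundy_eq_of_forall_le ⟨_, isGrundyKColoring_cycleColoring hq hm⟩ fun _ hc v => by
    simpa only [multipartiteCycle.isRegularOfDegree.degree_eq] using hc.le_degree_add_one v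

theorem grundy_multipartiteCycle {r : ℕ} {f : Fin r → Fin (q + 1)} (hf : Surjective f)
    (hq : 1 ≤ q) (hm : 2 ≤ m) : grundy (multipartiteCycle m f) = q + 2 := by
  rw [← grundy_multipartiteCycle_id hq hm]
  exact grundy_comap (H := multipartiteCycle m id) (surjective_id.prodMap hf)

end GrundyNumber

theorem exists_large_regular_with_grundy_general (r k : ℕ)
    (hk1 : 3 ≤ k) (hk2 : k ≤ r + 1) (N : ℕ) :
    ∃ (n : ℕ) (G : SimpleGraph (Fin n)) (_ : DecidableRel G.Adj),
      N ≤ n ∧ G.Connected ∧ G.IsRegularOfDegree r ∧ grundy G = k := by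
  obtain ⟨q, rfl⟩ : ∃ q, k = q + 2 := ⟨k - 2, by omega⟩
  let f : Fin r → Fin (q + 1) := fun a => Fin.clamp a q
  have hf : Surjective f := fun j =>
    ⟨⟨j, by omega⟩, Fin.ext (by simp [f, Fin.clamp, Nat.lt_succ_iff.1 j.isLt])⟩
  let H := multipartiteCycle (N + 2) f
  have hcard : Fintype.card (Fin (2 * (N + 2)) × Fin r) = 2 * (N + 2) * r := by simp
  let e := H.overFinIso hcard
  refine ⟨_, H.overFin hcard, Classical.decRel _, by nlinarith, ?_, fun v => ?_, ?_⟩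
  · exact e.connected_iff.1 (multipartiteCycle.connected (by omega) hf (by omega))
  · obtain ⟨x, rfl⟩ := e.surjective v
    rw [e.degree_eq]
    exact multipartiteCycle.isRegularOfDegree x
  · rw [SimpleGraph.overFin, grundy_comap (Equiv.surjective _)]
    exact grundy_multipartiteCycle hf (by omega) (by omega)

theorem exists_large_regular_with_grundy (r k : ℕ) (hr : 4 ≤ r)
    (hk1 : 3 ≤ k) (hk2 : k ≤ r + 1) (N : ℕ) :
    ∃ (n : ℕ) (G : SimpleGraph (Fin n)) (_ : DecidableRel G.Adj),
      N ≤ n ∧ G.Connected ∧ G.IsRegularOfDegree r ∧ grundy G = k :=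
  exists_large_regular_with_grundy_general r k hk1 hk2 N
end
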